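/- arXiv:2107.14542 — 5 statements merged into one kernel-verified Lean document; each statement's English description precedes it below -/
import Mathlib

section
/- Suppose there exists a constant C_κ ≥ 0 such that |τ_γ - e^{-κγ}| ≤ C_κ γ² and τ_γ ∈ (0,1) for all γ ∈ (0, γ̄], where γ̄ ≤ (κ + 2C_κ/κ)^{-1} and κ > 0. Then for any γ ∈ (0, γ̄] and any integer ℓ ≥ 1, it holds |τ_γ^ℓ - e^{-κγℓ}| ≤ C_κ ℓ γ². -/
/-!
Both `τ_γ` and `e^{-κγ}` lie in `[0, 1]`, and `e^{-κγℓ} = (e^{-κγ})^ℓ`; for numbers of absolute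
value at most one, `a^ℓ - b^ℓ = (a - b) ∑ a^i b^{ℓ-1-i}` gives `|a^ℓ - b^ℓ| ≤ ℓ |a - b|`.
-/

open Real Set

theorem abs_pow_sub_pow_le_mul_abs_sub_of_abs_le_one {α : Type*} [CommRing α] [LinearOrder α]
    [IsOrderedRing α] {a b : α} (ha : |a| ≤ 1) (hb : |b| ≤ 1) (n : ℕ) :
    |a ^ n - b ^ n| ≤ n * |a - b| :=
  calc |a ^ n - b ^ n| ≤ |a - b| * n * max |a| |b| ^ (n - 1) := abs_pow_sub_pow_le a b n
    _ ≤ |a - b| * n * 1 := by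
      gcongr
      exact pow_le_one₀ (le_max_of_le_left (abs_nonneg a)) (max_le ha hb)
    _ = n * |a - b| := by ring

theorem tau_pow_approx_general (κ Cκ γbar : ℝ) (τ : ℝ → ℝ)
    (hκ : 0 < κ)
    (happrox : ∀ γ ∈ Ioc (0 : ℝ) γbar, |τ γ - exp (-κ * γ)| ≤ Cκ * γ ^ 2)
    (hτ : ∀ γ ∈ Ioc (0 : ℝ) γbar, τ γ ∈ Ioo (0 : ℝ) 1) :
    ∀ γ ∈ Ioc (0 : ℝ) γbar, ∀ ℓ : ℕ, 1 ≤ ℓ →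
      |τ γ ^ ℓ - exp (-κ * γ * ℓ)| ≤ Cκ * ℓ * γ ^ 2 := by
  intro γ hγ ℓ _
  have hτ_le : |τ γ| ≤ 1 := abs_le.mpr ⟨by linarith [(hτ γ hγ).1], (hτ γ hγ).2.le⟩
  have hexp_le : |exp (-κ * γ)| ≤ 1 := by
    rw [abs_of_pos (exp_pos _), exp_le_one_iff]
    exact mul_nonpos_of_nonpos_of_nonneg (neg_nonpos.mpr hκ.le) hγ.1.le
  rw [show exp (-κ * γ * ℓ) = exp (-κ * γ) ^ ℓ by rw [← exp_nat_mul]; ring_nf]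
  calc |τ γ ^ ℓ - exp (-κ * γ) ^ ℓ| ≤ ℓ * |τ γ - exp (-κ * γ)| :=
        abs_pow_sub_pow_le_mul_abs_sub_of_abs_le_one hτ_le hexp_le ℓ
    _ ≤ ℓ * (Cκ * γ ^ 2) := by gcongr; exact happrox γ hγ
    _ = Cκ * ℓ * γ ^ 2 := by ring

/-- If `|τ_γ - e^{-κγ}| ≤ C_κ γ²` and `τ_γ ∈ (0,1)` for all `γ ∈ (0, γ̄]`, with
`γ̄ ≤ (κ + 2C_κ/κ)⁻¹`, then `|τ_γ^ℓ - e^{-κγℓ}| ≤ C_κ ℓ γ²` for all `γ ∈ (0, γ̄]`, `ℓ ≥ 1`. -/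
theorem tau_pow_approx (κ Cκ γbar : ℝ) (τ : ℝ → ℝ)
    (hκ : 0 < κ) (hC : 0 ≤ Cκ) (hγbar : γbar ≤ (κ + 2 * Cκ / κ)⁻¹)
    (happrox : ∀ γ ∈ Ioc (0 : ℝ) γbar, |τ γ - exp (-κ * γ)| ≤ Cκ * γ ^ 2)
    (hτ : ∀ γ ∈ Ioc (0 : ℝ) γbar, τ γ ∈ Ioo (0 : ℝ) 1) :
    ∀ γ ∈ Ioc (0 : ℝ) γbar, ∀ ℓ : ℕ, 1 ≤ ℓ →
      |τ γ ^ ℓ - exp (-κ * γ * ℓ)| ≤ Cκ * ℓ * γ ^ 2 :=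
  tau_pow_approx_general κ Cκ γbar τ hκ happrox hτ
end

section
/- Suppose |τ_γ - e^{-κγ}| ≤ C_κ γ², τ_γ ∈ (0,1), and γ ≤ (κ + 2C_κ/κ)^{-1} where κ > 0, C_κ ≥ 0. Then |τ_γ - 1| ≤ (κ + C_κ γ)γ and |γ/(1 - τ_γ) - 1/κ| ≤ (2C_κ/κ² + 1)γ. -/
/-!
Write `x = κγ`. Since `1 - x ≤ e^{-x} ≤ 1 - x + x²/2` for `x ≥ 0`, the hypothesis places `τ`
within `Cκγ²` of `e^{-x}`, hence within `x + Cκγ²` of `1` and within `(κ² + 2Cκ)γ²/2` of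
`1 - x`. The step-size condition says `γ(κ² + 2Cκ) ≤ κ`, so that error is at most `κγ/2`,
which keeps `1 - τ ≥ κγ/2` away from zero; the second estimate then follows from
`γ/(1-τ) - 1/κ = (κγ - (1-τ)) / (κ(1-τ))`.
-/

open Real

namespace Real

lemma exp_neg_le_one_sub_add_sq_div_two {x : ℝ} (hx : 0 ≤ x) :
    exp (-x) ≤ 1 - x + x ^ 2 / 2 := by
  have hpos : 0 < 1 + x + x ^ 2 / 2 := by positivity
  calc exp (-x) = (exp x)⁻¹ := exp_neg x
    _ ≤ (1 + x + x ^ 2 / 2)⁻¹ := inv_anti₀ hpos (quadratic_le_exp_of_nonneg hx)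
    _ ≤ 1 - x + x ^ 2 / 2 := by
      rw [inv_le_iff_one_le_mul₀ hpos]
      nlinarith [sq_nonneg x, sq_nonneg (x ^ 2)]

lemma abs_exp_neg_sub_one_sub_le {x : ℝ} (hx : 0 ≤ x) :
    |exp (-x) - (1 - x)| ≤ x ^ 2 / 2 := by
  rw [abs_le]
  constructor
  · linarith [one_sub_le_exp_neg x, sq_nonneg x]
  · linarith [exp_neg_le_one_sub_add_sq_div_two hx]

lemma abs_one_sub_exp_neg_le {x : ℝ} (hx : 0 ≤ x) : |1 - exp (-x)| ≤ x := by
  rw [abs_of_nonneg (sub_nonneg.mpr (exp_le_one_iff.mpr (neg_nonpos.mpr hx)))]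
  linarith [one_sub_le_exp_neg x]

end Real

section ApproxExpNeg

variable {τ x ε : ℝ}

lemma abs_sub_one_le_of_abs_sub_exp_neg_le (hx : 0 ≤ x) (h : |τ - exp (-x)| ≤ ε) :
    |τ - 1| ≤ x + ε := by
  calc |τ - 1| ≤ |τ - exp (-x)| + |exp (-x) - 1| := abs_sub_le _ _ _
    _ ≤ ε + x := by
      rw [abs_sub_comm (exp _)]
      exact add_le_add h (abs_one_sub_exp_neg_le hx)
    _ = x + ε := add_comm _ _

lemma abs_sub_one_sub_le_of_abs_sub_exp_neg_le (hx : 0 ≤ x) (h : |τ - exp (-x)| ≤ ε) :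
    |τ - (1 - x)| ≤ x ^ 2 / 2 + ε := by
  calc |τ - (1 - x)| ≤ |τ - exp (-x)| + |exp (-x) - (1 - x)| := abs_sub_le _ _ _
    _ ≤ ε + x ^ 2 / 2 := add_le_add h (abs_exp_neg_sub_one_sub_le hx)
    _ = x ^ 2 / 2 + ε := add_comm _ _

end ApproxExpNeg

lemma mul_sq_add_le_of_le_inv_add_div {κ b γ : ℝ} (hκ : 0 < κ) (hγ : 0 < γ)
    (h : γ ≤ (κ + b / κ)⁻¹) : γ * (κ ^ 2 + b) ≤ κ := by
  have hpos : 0 < κ + b / κ := inv_pos.mp (hγ.trans_le h)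
  have hγ_mul : γ * (κ + b / κ) ≤ 1 :=
    (le_mul_inv_iff₀ hpos).mp (by rwa [one_mul])
  calc γ * (κ ^ 2 + b) = κ * (γ * (κ + b / κ)) := by field_simp
    _ ≤ κ * 1 := mul_le_mul_of_nonneg_left hγ_mul hκ.le
    _ = κ := mul_one κ

section ReciprocalEstimate

variable {κ γ η d : ℝ}

lemma half_mul_le_of_abs_sub_mul_le (hγ : 0 ≤ γ) (hη : γ * η ≤ κ)
    (h : |d - κ * γ| ≤ η * γ ^ 2 / 2) : κ * γ / 2 ≤ d := by
  have hd := (abs_le.mp h).1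
  have : η * γ ^ 2 ≤ κ * γ := by nlinarith
  linarith

lemma abs_div_sub_inv_le_of_abs_sub_mul_le (hκ : 0 < κ) (hγ : 0 < γ) (hη : γ * η ≤ κ)
    (h : |d - κ * γ| ≤ η * γ ^ 2 / 2) : |γ / d - 1 / κ| ≤ η / κ ^ 2 * γ := by
  have hd : κ * γ / 2 ≤ d := half_mul_le_of_abs_sub_mul_le hγ.le hη h
  have hd_pos : 0 < d := by linarith [mul_pos hκ hγ]
  have hκd : 0 < κ * d := mul_pos hκ hd_pos
  have hsplit : γ / d - 1 / κ = (κ * γ - d) / (κ * d) := by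
    field_simp
  rw [hsplit, abs_div, abs_of_pos hκd, abs_sub_comm, div_le_iff₀ hκd]
  calc |d - κ * γ| ≤ η * γ ^ 2 / 2 := h
    _ = η / κ ^ 2 * γ * (κ * (κ * γ / 2)) := by field_simp
    _ ≤ η / κ ^ 2 * γ * (κ * d) := by
      have : 0 ≤ η := by nlinarith [(abs_nonneg _).trans h, pow_pos hγ 2]
      gcongr

end ReciprocalEstimate

theorem tau_estimates_general (κ Cκ γ τ : ℝ)
    (hκ : 0 < κ) (hγ : 0 < γ) (hγle : γ ≤ (κ + 2 * Cκ / κ)⁻¹)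
    (happrox : |τ - exp (-κ * γ)| ≤ Cκ * γ ^ 2) :
    |τ - 1| ≤ (κ + Cκ * γ) * γ ∧
      |γ / (1 - τ) - 1 / κ| ≤ (2 * Cκ / κ ^ 2 + 1) * γ := by
  have hx : 0 ≤ κ * γ := by positivity
  rw [neg_mul] at happrox
  constructor
  · calc |τ - 1| ≤ κ * γ + Cκ * γ ^ 2 := abs_sub_one_le_of_abs_sub_exp_neg_le hx happrox
      _ = (κ + Cκ * γ) * γ := by ring
  · have hη : γ * (κ ^ 2 + 2 * Cκ) ≤ κ := mul_sq_add_le_of_le_inv_add_div hκ hγ hγle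
    have hclose : |(1 - τ) - κ * γ| ≤ (κ ^ 2 + 2 * Cκ) * γ ^ 2 / 2 := by
      calc |(1 - τ) - κ * γ| = |τ - (1 - κ * γ)| := by rw [← abs_neg]; congr 1; ring
        _ ≤ (κ * γ) ^ 2 / 2 + Cκ * γ ^ 2 := abs_sub_one_sub_le_of_abs_sub_exp_neg_le hx happrox
        _ = (κ ^ 2 + 2 * Cκ) * γ ^ 2 / 2 := by ring
    calc |γ / (1 - τ) - 1 / κ| ≤ (κ ^ 2 + 2 * Cκ) / κ ^ 2 * γ :=
          abs_div_sub_inv_le_of_abs_sub_mul_le hκ hγ hη hclose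
      _ = (2 * Cκ / κ ^ 2 + 1) * γ := by field_simp; ring

/-- If `|τ - e^{-κγ}| ≤ C_κ γ²`, `τ ∈ (0,1)` and `γ ≤ (κ + 2C_κ/κ)⁻¹`, then
`|τ - 1| ≤ (κ + C_κ γ)γ` and `|γ/(1-τ) - 1/κ| ≤ (2C_κ/κ² + 1)γ`. -/
theorem tau_estimates (κ Cκ γ τ : ℝ)
    (hκ : 0 < κ) (hC : 0 ≤ Cκ) (hγ : 0 < γ) (hγle : γ ≤ (κ + 2 * Cκ / κ)⁻¹)
    (happrox : |τ - exp (-κ * γ)| ≤ Cκ * γ ^ 2) (hτ : τ ∈ Set.Ioo (0 : ℝ) 1) :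
    |τ - 1| ≤ (κ + Cκ * γ) * γ ∧
      |γ / (1 - τ) - 1 / κ| ≤ (2 * Cκ / κ ^ 2 + 1) * γ :=
  tau_estimates_general κ Cκ γ τ hκ hγ hγle happrox
end

section
/- Let σ, κ > 0 and Σ₁, Σ₂, Σ₃ as defined from the kinetic Langevin covariance. There exists t̄₀ > 0 and positive constants ϱ̲₁, ϱ̲₂, ϱ̲₃, ϱ̄₁, ϱ̄₂, ϱ̄₃ with ϱ̲₁ϱ̲₃ - ϱ̄₂² > 0, such that for all t₀ ∈ (0, t̄₀]: ϱ̲₁ ≤ Σ₁(t₀)/(σ²t₀³) ≤ ϱ̄₁, ϱ̲₂ ≤ Σ₂(t₀)/(σ²t₀²) ≤ ϱ̄₂, and ϱ̲₃ ≤ Σ₃(t₀)/(σ²t₀) ≤ ϱ̄₃. -/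
open Real MeasureTheory Set

/-! For `κ u ≤ δ` the kernels are sandwiched by their leading Taylor terms:
`(1 - e^{-κu})/κ ∈ [(1 - δ) u, u]` and `e^{-κu} ∈ [1 - δ, 1]`. Integrating `c uⁿ ≤ kernel ≤ uⁿ`
over `[0, t₀]` with `κ t₀ ≤ δ` puts the rescaled entry in `[c / (n + 1), 1 / (n + 1)]`, so the
lower constants tend to `1/3, 1/2, 1` as `δ → 0`, and the strict inequality `1/3 · 1 > (1/2)²`
survives at `δ = 1/20`. -/

theorem mul_one_sub_le_one_sub_exp_neg {x : ℝ} (hx : 0 ≤ x) : x * (1 - x) ≤ 1 - exp (-x) := by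
  -- `e^{-x} ≤ 1/(1 + x)` and `x/(1 + x) ≥ x (1 - x)`
  have h : (x + 1) * exp (-x) ≤ 1 := by
    calc (x + 1) * exp (-x) ≤ exp x * exp (-x) := by gcongr; exact add_one_le_exp x
      _ = 1 := by rw [← exp_add, add_neg_cancel, exp_zero]
  nlinarith [exp_pos (-x), mul_nonneg hx (sq_nonneg x)]

section Kernel

variable {κ δ u : ℝ}

theorem one_sub_exp_neg_mul_div_nonneg (hκ : 0 < κ) (hu : 0 ≤ u) :
    0 ≤ (1 - exp (-κ * u)) / κ := by
  have : exp (-κ * u) ≤ 1 := exp_le_one_iff.2 (by nlinarith)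
  exact div_nonneg (by linarith) hκ.le

theorem one_sub_exp_neg_mul_div_le (hκ : 0 < κ) (u : ℝ) : (1 - exp (-κ * u)) / κ ≤ u := by
  rw [div_le_iff₀ hκ, neg_mul]
  linarith [one_sub_le_exp_neg (κ * u)]

theorem one_sub_mul_le_one_sub_exp_neg_mul_div (hκ : 0 < κ) (hu : 0 ≤ u) (hκu : κ * u ≤ δ) :
    (1 - δ) * u ≤ (1 - exp (-κ * u)) / κ := by
  have h := mul_one_sub_le_one_sub_exp_neg (mul_nonneg hκ.le hu)
  rw [le_div_iff₀ hκ, neg_mul]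
  nlinarith [mul_nonneg (mul_nonneg hκ.le hu) (sub_nonneg.2 hκu)]

theorem one_sub_le_exp_neg_mul (hκu : κ * u ≤ δ) : 1 - δ ≤ exp (-κ * u) := by
  rw [neg_mul]
  linarith [one_sub_le_exp_neg (κ * u)]

theorem one_sub_exp_neg_mul_div_sq_bounds (hκ : 0 < κ) (hu : 0 ≤ u) (hκu : κ * u ≤ δ)
    (hδ : δ ≤ 1) :
    (1 - δ) ^ 2 * u ^ 2 ≤ ((1 - exp (-κ * u)) / κ) ^ 2 ∧ ((1 - exp (-κ * u)) / κ) ^ 2 ≤ u ^ 2 :=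
  ⟨mul_pow (1 - δ) u 2 ▸ pow_le_pow_left₀ (mul_nonneg (sub_nonneg.2 hδ) hu)
      (one_sub_mul_le_one_sub_exp_neg_mul_div hκ hu hκu) 2,
    pow_le_pow_left₀ (one_sub_exp_neg_mul_div_nonneg hκ hu) (one_sub_exp_neg_mul_div_le hκ u) 2⟩

theorem exp_neg_mul_mul_one_sub_exp_neg_mul_div_bounds (hκ : 0 < κ) (hu : 0 ≤ u)
    (hκu : κ * u ≤ δ) (hδ : δ ≤ 1) :
    (1 - δ) ^ 2 * u ^ 1 ≤ exp (-κ * u) * (1 - exp (-κ * u)) / κ ∧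
      exp (-κ * u) * (1 - exp (-κ * u)) / κ ≤ u ^ 1 := by
  rw [mul_div_assoc, pow_one, sq, mul_assoc]
  have hφ := one_sub_exp_neg_mul_div_nonneg hκ hu
  exact ⟨mul_le_mul (one_sub_le_exp_neg_mul hκu)
      (one_sub_mul_le_one_sub_exp_neg_mul_div hκ hu hκu) (mul_nonneg (sub_nonneg.2 hδ) hu)
      (exp_pos _).le,
    (mul_le_of_le_one_left hφ (exp_le_one_iff.2 (by nlinarith))).trans
      (one_sub_exp_neg_mul_div_le hκ u)⟩

theorem exp_neg_two_mul_mul_bounds (hκ : 0 < κ) (hu : 0 ≤ u) (hκu : κ * u ≤ δ) :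
    (1 - 2 * δ) * u ^ 0 ≤ exp (-2 * κ * u) ∧ exp (-2 * κ * u) ≤ u ^ 0 := by
  rw [pow_zero, mul_one, neg_mul 2 κ]
  exact ⟨one_sub_le_exp_neg_mul (by linarith), exp_le_one_iff.2 (by nlinarith)⟩

end Kernel

theorem integral_comp_sub_div_pow_bounds {F : ℝ → ℝ} {t c : ℝ} (n : ℕ) (ht : 0 < t)
    (hF : Continuous F) (hFt : ∀ u ∈ Icc 0 t, c * u ^ n ≤ F u ∧ F u ≤ u ^ n) :
    c / (n + 1) ≤ (∫ s in 0..t, F (t - s)) / t ^ (n + 1) ∧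
      (∫ s in 0..t, F (t - s)) / t ^ (n + 1) ≤ 1 / (n + 1) := by
  rw [intervalIntegral.integral_comp_sub_left F t, sub_self, sub_zero]
  have hpow : ∫ u in 0..t, u ^ n = t ^ (n + 1) / (n + 1) := by simp [integral_pow]
  have hcont : ∀ g : ℝ → ℝ, Continuous g → IntervalIntegrable g volume 0 t :=
    fun g hg => hg.intervalIntegrable 0 t
  have hlower : c * (t ^ (n + 1) / (n + 1)) ≤ ∫ u in 0..t, F u := by
    rw [← hpow, ← intervalIntegral.integral_const_mul]
    exact intervalIntegral.integral_mono_on ht.le (hcont _ (by fun_prop)) (hcont _ hF)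
      fun u hu => (hFt u hu).1
  have hupper : ∫ u in 0..t, F u ≤ t ^ (n + 1) / (n + 1) :=
    hpow ▸ intervalIntegral.integral_mono_on ht.le (hcont _ hF) (hcont _ (by fun_prop))
      fun u hu => (hFt u hu).2
  have htn : 0 < t ^ (n + 1) := pow_pos ht _
  constructor
  · rwa [le_div_iff₀ htn, div_mul_eq_mul_div, mul_div_assoc]
  · rwa [div_le_iff₀ htn, one_div_mul_eq_div]

/-- There exist `t̄₀ > 0` and positive constants `r₁, r₂, r₃, R₁, R₂, R₃` with
`r₁ r₃ - R₂² > 0` such that the rescaled covariance entries `Σᵢ(t₀)` of the kinetic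
Langevin process are bounded between them for all `t₀ ∈ (0, t̄₀]`. -/
theorem langevin_covariance_scaling (σ κ : ℝ) (hσ : 0 < σ) (hκ : 0 < κ) :
    ∃ tbar : ℝ, 0 < tbar ∧ ∃ r1 r2 r3 R1 R2 R3 : ℝ,
      0 < r1 ∧ 0 < r2 ∧ 0 < r3 ∧ 0 < R1 ∧ 0 < R2 ∧ 0 < R3 ∧
      r1 * r3 - R2 ^ 2 > 0 ∧
      ∀ t₀ ∈ Ioc (0 : ℝ) tbar,
        (r1 ≤ (σ ^ 2 * ∫ s in (0:ℝ)..t₀, ((1 - exp (-κ * (t₀ - s))) / κ) ^ 2) /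
            (σ ^ 2 * t₀ ^ 3) ∧
          (σ ^ 2 * ∫ s in (0:ℝ)..t₀, ((1 - exp (-κ * (t₀ - s))) / κ) ^ 2) /
            (σ ^ 2 * t₀ ^ 3) ≤ R1) ∧
        (r2 ≤ (σ ^ 2 * ∫ s in (0:ℝ)..t₀, exp (-κ * (t₀ - s)) * (1 - exp (-κ * (t₀ - s))) / κ) /
            (σ ^ 2 * t₀ ^ 2) ∧
          (σ ^ 2 * ∫ s in (0:ℝ)..t₀, exp (-κ * (t₀ - s)) * (1 - exp (-κ * (t₀ - s))) / κ) /
            (σ ^ 2 * t₀ ^ 2) ≤ R2) ∧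
        (r3 ≤ (σ ^ 2 * ∫ s in (0:ℝ)..t₀, exp (-2 * κ * (t₀ - s))) / (σ ^ 2 * t₀) ∧
          (σ ^ 2 * ∫ s in (0:ℝ)..t₀, exp (-2 * κ * (t₀ - s))) / (σ ^ 2 * t₀) ≤ R3) := by
  refine ⟨(1 / 20) / κ, by positivity, (1 - 1 / 20) ^ 2 / 3, (1 - 1 / 20) ^ 2 / 2,
    1 - 2 * (1 / 20), 1 / 3, 1 / 2, 1, by norm_num, by norm_num, by norm_num, by norm_num,
    by norm_num, by norm_num, by norm_num, ?_⟩
  rintro t₀ ⟨ht₀, ht₀δ⟩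
  have hκu : ∀ u ∈ Icc 0 t₀, κ * u ≤ 1 / 20 :=
    fun u hu => (le_div_iff₀' hκ).1 (hu.2.trans ht₀δ)
  simp only [mul_div_mul_left _ _ (pow_ne_zero 2 hσ.ne')]
  refine ⟨?_, ?_, ?_⟩
  · have h := integral_comp_sub_div_pow_bounds 2 ht₀
      (by fun_prop : Continuous fun u => ((1 - exp (-κ * u)) / κ) ^ 2)
      fun u hu => one_sub_exp_neg_mul_div_sq_bounds hκ hu.1 (hκu u hu) (by norm_num)
    norm_num only at h ⊢
    exact h
  · have h := integral_comp_sub_div_pow_bounds 1 ht₀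
      (by fun_prop : Continuous fun u => exp (-κ * u) * (1 - exp (-κ * u)) / κ)
      fun u hu => exp_neg_mul_mul_one_sub_exp_neg_mul_div_bounds hκ hu.1 (hκu u hu) (by norm_num)
    norm_num only at h ⊢
    exact h
  · have h := integral_comp_sub_div_pow_bounds 0 ht₀
      (by fun_prop : Continuous fun u => exp (-2 * κ * u))
      fun u hu => exp_neg_two_mul_mul_bounds hκ hu.1 (hκu u hu)
    norm_num only [pow_one] at h ⊢
    exact h
end

section
/- Let κ, σ, γ > 0 and define Σ₁ = σ² ∫₀^γ ((1-e^{-κ(γ-s)})/κ)² ds, Σ₂ = σ² ∫₀^γ e^{-κ(γ-s)}(1-e^{-κ(γ-s)})/κ ds, Σ₃ = σ² ∫₀^γ e^{-2κ(γ-s)} ds. Then the 2×2 matrix with rows (Σ₁, Σ₂) and (Σ₂, Σ₃) is invertible, i.e., Σ₁Σ₃ - Σ₂² > 0. -/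
open Real MeasureTheory Set

/-! With `e s = exp (-κ (γ - s))` the entries are `σ²/κ² ∫ (1 - e)²`, `σ²/κ ∫ (1 - e) e` and
`σ² ∫ e²`, so the determinant is `σ⁴/κ²` times the Cauchy–Schwarz gap of `1 - e` and `e` in
`L²([0, γ])`. The gap is strict because `e` is not constant on `[0, γ]`, hence `1 - e` is not a
multiple of `e`. -/

theorem intervalIntegral.integral_sq_pos {f : ℝ → ℝ} {a b : ℝ} (hab : a < b)
    (hf : ContinuousOn f (Icc a b)) (hf_ne : ∃ x ∈ Icc a b, f x ≠ 0) :
    0 < ∫ x in a..b, f x ^ 2 :=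
  let ⟨x, hx, hx0⟩ := hf_ne
  intervalIntegral.integral_pos hab (hf.pow 2) (fun _ _ ↦ sq_nonneg _) ⟨x, hx, by positivity⟩

theorem intervalIntegral.sq_integral_mul_lt_integral_sq_mul_integral_sq {f g : ℝ → ℝ} {a b : ℝ}
    (hab : a < b) (hf : ContinuousOn f (Icc a b)) (hg : ContinuousOn g (Icc a b))
    (hg_ne : ∃ x ∈ Icc a b, g x ≠ 0) (hfg : ∀ t : ℝ, ∃ x ∈ Icc a b, f x ≠ t * g x) :
    (∫ x in a..b, f x * g x) ^ 2 < (∫ x in a..b, f x ^ 2) * ∫ x in a..b, g x ^ 2 := by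
  set A := ∫ x in a..b, f x ^ 2
  set B := ∫ x in a..b, f x * g x
  set C := ∫ x in a..b, g x ^ 2
  have hC : 0 < C := integral_sq_pos hab hg hg_ne
  -- `C f - B g` is `C` times the residual of the orthogonal projection of `f` onto `g`
  have hres : 0 < ∫ x in a..b, (C * f x - B * g x) ^ 2 := by
    refine integral_sq_pos hab ((hf.const_smul C).sub (hg.const_smul B)) ?_
    obtain ⟨x, hx, hne⟩ := hfg (B / C)
    refine ⟨x, hx, fun h ↦ hne ?_⟩
    field_simp
    linarith
  have hexpand : ∫ x in a..b, (C * f x - B * g x) ^ 2 = C * (A * C - B ^ 2) := by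
    have hsq : ∀ x, (C * f x - B * g x) ^ 2 =
        C ^ 2 * f x ^ 2 - 2 * B * C * (f x * g x) + B ^ 2 * g x ^ 2 := fun x ↦ by ring
    simp only [hsq]
    rw [integral_add, integral_sub, integral_const_mul, integral_const_mul, integral_const_mul]
    · ring
    all_goals exact ContinuousOn.intervalIntegrable_of_Icc hab.le (by fun_prop)
  nlinarith

theorem exists_one_sub_exp_ne_mul_exp {κ γ : ℝ} (hκ : κ ≠ 0) (hγ : 0 < γ) (t : ℝ) :
    ∃ s ∈ Icc 0 γ, 1 - exp (-κ * (γ - s)) ≠ t * exp (-κ * (γ - s)) := by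
  by_contra! h
  have ht : t = 0 := by simpa [eq_comm] using h γ ⟨hγ.le, le_rfl⟩
  have h0 := h 0 ⟨le_rfl, hγ.le⟩
  simp [ht, sub_eq_zero, eq_comm (a := (1 : ℝ)), hκ, hγ.ne'] at h0

/-- The covariance matrix of the noise increments of the stochastic exponential Euler
scheme is invertible: `Σ₁Σ₃ - Σ₂² > 0`. -/
theorem exponential_euler_covariance_invertible (κ σ γ : ℝ)
    (hκ : 0 < κ) (hσ : 0 < σ) (hγ : 0 < γ) :
    (σ ^ 2 * ∫ s in (0:ℝ)..γ, ((1 - exp (-κ * (γ - s))) / κ) ^ 2) *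
        (σ ^ 2 * ∫ s in (0:ℝ)..γ, exp (-2 * κ * (γ - s))) -
      (σ ^ 2 * ∫ s in (0:ℝ)..γ, exp (-κ * (γ - s)) * (1 - exp (-κ * (γ - s))) / κ) ^ 2 > 0 := by
  have hcs := intervalIntegral.sq_integral_mul_lt_integral_sq_mul_integral_sq
    (f := fun s ↦ 1 - exp (-κ * (γ - s))) (g := fun s ↦ exp (-κ * (γ - s))) hγ
    (by fun_prop) (by fun_prop) ⟨0, ⟨le_rfl, hγ.le⟩, (exp_pos _).ne'⟩
    (exists_one_sub_exp_ne_mul_exp hκ.ne' hγ)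
  have h₁ : ∫ s in (0:ℝ)..γ, ((1 - exp (-κ * (γ - s))) / κ) ^ 2 =
      (∫ s in (0:ℝ)..γ, (1 - exp (-κ * (γ - s))) ^ 2) / κ ^ 2 := by
    simp only [div_pow, intervalIntegral.integral_div]
  have h₂ : ∫ s in (0:ℝ)..γ, exp (-κ * (γ - s)) * (1 - exp (-κ * (γ - s))) / κ =
      (∫ s in (0:ℝ)..γ, (1 - exp (-κ * (γ - s))) * exp (-κ * (γ - s))) / κ := by
    simp only [mul_comm (exp _), intervalIntegral.integral_div]
  have h₃ : ∫ s in (0:ℝ)..γ, exp (-2 * κ * (γ - s)) = ∫ s in (0:ℝ)..γ, exp (-κ * (γ - s)) ^ 2 := by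
    simp only [← exp_nat_mul]
    ring_nf
  rw [h₁, h₂, h₃]
  generalize (∫ s in (0:ℝ)..γ, (1 - exp (-κ * (γ - s))) ^ 2) = A at hcs ⊢
  generalize (∫ s in (0:ℝ)..γ, (1 - exp (-κ * (γ - s))) * exp (-κ * (γ - s))) = B at hcs ⊢
  generalize (∫ s in (0:ℝ)..γ, exp (-κ * (γ - s)) ^ 2) = C at hcs ⊢
  have hdet : σ ^ 2 * (A / κ ^ 2) * (σ ^ 2 * C) - (σ ^ 2 * (B / κ)) ^ 2 =
      σ ^ 4 / κ ^ 2 * (A * C - B ^ 2) := by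
    field_simp
  rw [hdet]
  exact mul_pos (div_pos (pow_pos hσ 4) (pow_pos hκ 2)) (sub_pos.2 hcs)
end

section
/- Let U : ℝ^d → ℝ be C¹ with L-Lipschitz gradient, and suppose there exist a > 0 and b ∈ ℝ such that -⟨x, ∇U(x)⟩ ≤ -a(||x|| + ||∇U(x)||²) + b for all x. Then there exists b̃ ∈ ℝ such that for all x, h ∈ ℝ^d: -⟨x, ∇U(x+h)⟩ ≤ -a(||x|| + ||∇U(x)||²/4) + b̃(1 + ||h||²). -/
/-!
Split `-⟪x, ∇U(x+h)⟫ = -⟪x+h, ∇U(x+h)⟫ + ⟪h, ∇U(x+h)⟫` and apply the drift condition at `x+h`.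
Young's inequality bounds the cross term by `‖h‖²/(2a) + (a/2)‖∇U(x+h)‖²`, which eats half of the
`-a‖∇U(x+h)‖²` from the drift; the remaining `-(a/2)‖∇U(x+h)‖²` is at most `-(a/4)‖∇U(x)‖²` up to
`O(‖h‖²)` because `∇U` is Lipschitz, and `‖x+h‖ ≥ ‖x‖ - ‖h‖` handles the linear term.
-/

open Gradient RealInnerProductSpace

theorem LipschitzWith.sq_norm_le {E : Type*} [SeminormedAddCommGroup E] {L : NNReal}
    {g : E → E} (hg : LipschitzWith L g) (x h : E) :
    ‖g x‖ ^ 2 ≤ 2 * ‖g (x + h)‖ ^ 2 + 2 * (L : ℝ) ^ 2 * ‖h‖ ^ 2 := by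
  have hdist : ‖g x‖ ≤ ‖g (x + h)‖ + L * ‖h‖ := by
    have := hg.dist_le_mul (x + h) x
    rw [dist_eq_norm, dist_eq_norm, add_sub_cancel_left] at this
    linarith [norm_le_norm_add_norm_sub (g (x + h)) (g x)]
  calc ‖g x‖ ^ 2 ≤ (‖g (x + h)‖ + L * ‖h‖) ^ 2 := by gcongr
    _ ≤ 2 * (‖g (x + h)‖ ^ 2 + (L * ‖h‖) ^ 2) := add_sq_le
    _ = _ := by ring

section

variable {E : Type*} [NormedAddCommGroup E] [InnerProductSpace ℝ E]

theorem real_inner_le_sq_div_add_mul_sq {a : ℝ} (ha : 0 < a) (u v : E) :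
    ⟪u, v⟫ ≤ ‖u‖ ^ 2 / (2 * a) + a / 2 * ‖v‖ ^ 2 := by
  have young : ‖u‖ * ‖v‖ ≤ ‖u‖ ^ 2 / (2 * a) + a / 2 * ‖v‖ ^ 2 := by
    rw [div_add' _ _ _ (by positivity), le_div_iff₀ (by positivity)]
    nlinarith [sq_nonneg (‖u‖ - a * ‖v‖)]
  exact (real_inner_le_norm u v).trans young

theorem drift_perturbed_of_lipschitz {L : NNReal} {g : E → E} (hg : LipschitzWith L g)
    {a b : ℝ} (ha : 0 < a) (hdrift : ∀ x, -⟪x, g x⟫ ≤ -(a * (‖x‖ + ‖g x‖ ^ 2)) + b) (x h : E) :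
    -⟪x, g (x + h)⟫ ≤ -(a * (‖x‖ + ‖g x‖ ^ 2 / 4))
      + (|b| + a + 1 / (2 * a) + a * (L : ℝ) ^ 2 / 2) * (1 + ‖h‖ ^ 2) := by
  set v := g (x + h)
  have hgrad := mul_le_mul_of_nonneg_left (hg.sq_norm_le x h) (by positivity : 0 ≤ a / 4)
  have hnorm := mul_le_mul_of_nonneg_left (norm_le_add_norm_add x h) ha.le
  have hlin : a * ‖h‖ ≤ a * (1 + ‖h‖ ^ 2) := by
    gcongr
    nlinarith [sq_nonneg (‖h‖ - 1)]
  have hb : b ≤ |b| * (1 + ‖h‖ ^ 2) :=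
    (le_abs_self b).trans (le_mul_of_one_le_right (abs_nonneg b) (by simp))
  have hsq (c : ℝ) (hc : 0 ≤ c) : c * ‖h‖ ^ 2 ≤ c * (1 + ‖h‖ ^ 2) := by gcongr; simp
  calc -⟪x, v⟫ = -⟪x + h, v⟫ + ⟪h, v⟫ := by rw [inner_add_left]; ring
    _ ≤ (-(a * (‖x + h‖ + ‖v‖ ^ 2)) + b) + (‖h‖ ^ 2 / (2 * a) + a / 2 * ‖v‖ ^ 2) :=
      add_le_add (hdrift (x + h)) (real_inner_le_sq_div_add_mul_sq ha h v)
    _ ≤ -(a * (‖x‖ + ‖g x‖ ^ 2 / 4))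
        + (b + a * ‖h‖ + 1 / (2 * a) * ‖h‖ ^ 2 + a * (L : ℝ) ^ 2 / 2 * ‖h‖ ^ 2) := by
      have : ‖h‖ ^ 2 / (2 * a) = 1 / (2 * a) * ‖h‖ ^ 2 := by ring
      linarith
    _ ≤ _ := by
      linarith [hsq (1 / (2 * a)) (by positivity), hsq (a * (L : ℝ) ^ 2 / 2) (by positivity)]

end

theorem grad_drift_perturbed_general {d : ℕ} (L : NNReal) (U : EuclideanSpace ℝ (Fin d) → ℝ)
    (hLip : LipschitzWith L (∇ U))
    (a b : ℝ) (ha : 0 < a)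
    (hdrift : ∀ x, -⟪x, ∇ U x⟫ ≤ -(a * (‖x‖ + ‖∇ U x‖ ^ 2)) + b) :
    ∃ btilde : ℝ, ∀ x h : EuclideanSpace ℝ (Fin d),
      -⟪x, ∇ U (x + h)⟫ ≤ -(a * (‖x‖ + ‖∇ U x‖ ^ 2 / 4)) + btilde * (1 + ‖h‖ ^ 2) :=
  ⟨_, drift_perturbed_of_lipschitz hLip ha hdrift⟩

/-- If `∇U` is `L`-Lipschitz and `-⟨x, ∇U(x)⟩ ≤ -a(‖x‖ + ‖∇U(x)‖²) + b`, then there is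
`b̃` with `-⟨x, ∇U(x+h)⟩ ≤ -a(‖x‖ + ‖∇U(x)‖²/4) + b̃(1 + ‖h‖²)` for all `x, h`. -/
theorem grad_drift_perturbed {d : ℕ} (L : NNReal) (U : EuclideanSpace ℝ (Fin d) → ℝ)
    (hC1 : ContDiff ℝ 1 U) (hLip : LipschitzWith L (∇ U))
    (a b : ℝ) (ha : 0 < a)
    (hdrift : ∀ x, -⟪x, ∇ U x⟫ ≤ -(a * (‖x‖ + ‖∇ U x‖ ^ 2)) + b) :
    ∃ btilde : ℝ, ∀ x h : EuclideanSpace ℝ (Fin d),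
      -⟪x, ∇ U (x + h)⟫ ≤ -(a * (‖x‖ + ‖∇ U x‖ ^ 2 / 4)) + btilde * (1 + ‖h‖ ^ 2) :=
  grad_drift_perturbed_general L U hLip a b ha hdrift
end
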